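/- arXiv:2307.16658 — 3 statements merged into one kernel-verified Lean document; each statement's English description precedes it below -/
import Mathlib

section
/- Let ω ∈ (0,1) be a quadratic irrational with F^[p](ω) = ω for some integer p ≥ 1, where F is the Gauss map F(x) = 1/x − ⌊1/x⌋. Then −1/ω' lies in (0,1), is a quadratic irrational, satisfies F^[p](−1/ω') = −1/ω', and for every integer t with 0 ≤ t ≤ p one has F^[t](−1/ω') = −1/(F^[p−t](ω))', where (·)' denotes Galois conjugation. -/
/-- The Gauss map `x ↦ 1/x - ⌊1/x⌋` on irrationals in `(0,1)`, extended by `0` elsewhere. -/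
noncomputable def gaussMap (x : ℝ) : ℝ :=
  open Classical in
  if Irrational x ∧ x ∈ Set.Ioo (0 : ℝ) 1 then 1 / x - ⌊1 / x⌋ else 0

/-- `x` is a quadratic irrational. -/
def IsQuadraticIrrational (x : ℝ) : Prop :=
  Irrational x ∧ ∃ a b c : ℤ, a ≠ 0 ∧ (a : ℝ) * x ^ 2 + (b : ℝ) * x + (c : ℝ) = 0

/-!
Write `x_t = F^[t] ω` and `n_t = ⌊1 / x_t⌋`, so that `x_{t+1} = 1 / x_t - n_t`. Galois conjugation
commutes with `x ↦ 1 / x - n`, hence the conjugates satisfy `x'_{t+1} = 1 / x'_t - n_t` as well.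
If every `x'_t` were positive, then `0 < x'_t ≤ 1` and `|x_{t+1} - x'_{t+1}| = |x_t - x'_t| / (x_t x'_t)`
would grow strictly, contradicting periodicity; so some `x'_t` is negative, after which all later
ones are `< -1`, and by periodicity all of them are. Then `y_t = -1 / x'_t ∈ (0,1)` satisfies
`1 / y_{t+1} = n_t + y_t`, i.e. `F y_{t+1} = y_t`: the dual orbit runs backwards.
-/

open Set Function

def gaussDomain : Set ℝ := {x | Irrational x ∧ x ∈ Ioo 0 1}

lemma gaussMap_of_mem {x : ℝ} (hx : x ∈ gaussDomain) : gaussMap x = 1 / x - ⌊1 / x⌋ := by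
  rw [gaussMap, if_pos (show Irrational x ∧ x ∈ Ioo 0 1 from hx)]

lemma one_le_floor_one_div {x : ℝ} (hx : x ∈ Ioo (0 : ℝ) 1) : (1 : ℝ) ≤ ⌊1 / x⌋ := by
  exact_mod_cast Int.le_floor.mpr (by exact_mod_cast one_le_one_div hx.1 hx.2.le)

lemma mapsTo_gaussMap : MapsTo gaussMap gaussDomain gaussDomain := by
  intro x hx
  rw [gaussMap_of_mem hx]
  have hirr : Irrational (1 / x - ⌊1 / x⌋) := by
    rw [one_div]
    exact hx.1.inv.sub_intCast _
  refine ⟨hirr, ?_, ?_⟩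
  · exact (sub_nonneg.mpr (Int.floor_le _)).lt_of_ne hirr.ne_zero.symm
  · linarith [Int.lt_floor_add_one (1 / x)]

lemma gaussMap_eq_of_one_div_eq {y z : ℝ} (hy : y ∈ gaussDomain) {n : ℤ} (hz : z ∈ Ico 0 1)
    (h : 1 / y = n + z) : gaussMap y = z := by
  rw [gaussMap_of_mem hy, h, Int.floor_intCast_add, Int.floor_eq_zero_iff.mpr hz]
  push_cast
  ring

lemma neg_one_div_mem_gaussDomain {y : ℝ} (hy : Irrational y) (hy1 : y < -1) :
    -1 / y ∈ gaussDomain := by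
  refine ⟨?_, div_pos_of_neg_of_neg neg_one_lt_zero (by linarith),
    (div_lt_one_of_neg (by linarith)).mpr hy1⟩
  rw [neg_div, one_div]
  exact hy.inv.neg

lemma Irrational.intCast_mul_ne_intCast {x : ℝ} (hx : Irrational x) {m : ℤ} (hm : m ≠ 0)
    (n : ℤ) : (m : ℝ) * x ≠ n :=
  fun h => Int.not_irrational n (h ▸ hx.intCast_mul hm)

lemma Irrational.quadratic_const_ne_zero {x : ℝ} (hx : Irrational x) {A B C : ℤ} (hA : A ≠ 0)
    (h : (A : ℝ) * x ^ 2 + B * x + C = 0) : C ≠ 0 := by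
  rintro rfl
  refine hx.intCast_mul_ne_intCast hA (-B) ?_
  apply mul_left_cancel₀ hx.ne_zero
  push_cast at h ⊢
  linear_combination h

lemma abs_sub_lt_abs_one_div_sub_one_div {x y : ℝ} (hx : 0 < x) (hx1 : x < 1) (hy : 0 < y)
    (hy1 : y ≤ 1) (hxy : x ≠ y) : |x - y| < |1 / x - 1 / y| := by
  have hxy0 : 0 < x * y := mul_pos hx hy
  have hdiff : 1 / x - 1 / y = (y - x) / (x * y) := by
    field_simp
  rw [hdiff, abs_div, abs_of_pos hxy0, lt_div_iff₀ hxy0, abs_sub_comm]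
  exact mul_lt_of_lt_one_right (abs_pos.mpr (sub_ne_zero.mpr hxy.symm)) (by nlinarith)

lemma iterate_apply_of_apply_succ {α : Type*} {f : α → α} {u : ℕ → α}
    (h : ∀ t, f (u (t + 1)) = u t) {n t : ℕ} (ht : t ≤ n) : f^[t] (u n) = u (n - t) := by
  induction t with
  | zero => rfl
  | succ t ih =>
    rw [iterate_succ_apply', ih (by omega), show n - t = n - (t + 1) + 1 by omega, h]

def IsGaloisConj (x x' : ℝ) : Prop :=
  ∃ A B C : ℤ, A ≠ 0 ∧ (A : ℝ) * x ^ 2 + B * x + C = 0 ∧ x' = -(B : ℝ) / A - x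

namespace IsGaloisConj

variable {x x' : ℝ}

lemma unique {y : ℝ} (hx : Irrational x) (hx' : IsGaloisConj x x') (hy : IsGaloisConj x y) :
    x' = y := by
  obtain ⟨A, B, C, hA, hroot, rfl⟩ := hx'
  obtain ⟨A', B', C', hA', hroot', rfl⟩ := hy
  have hB : A' * B = A * B' := by
    by_contra hne
    refine hx.intCast_mul_ne_intCast (sub_ne_zero.mpr hne) (A * C' - A' * C) ?_
    push_cast
    linear_combination (A' : ℝ) * hroot - A * hroot'
  have hBR : (A' : ℝ) * B = A * B' := by exact_mod_cast hB
  rw [sub_left_inj, div_eq_div_iff (by exact_mod_cast hA) (by exact_mod_cast hA')]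
  linear_combination -hBR

lemma irrational (hx : Irrational x) (h : IsGaloisConj x x') : Irrational x' := by
  obtain ⟨A, B, C, -, -, rfl⟩ := h
  have hq : -(B : ℝ) / A = ((-B / A : ℚ) : ℝ) := by push_cast; ring
  rw [hq]
  exact hx.ratCast_sub _

lemma ne (hx : Irrational x) (h : IsGaloisConj x x') : x ≠ x' := by
  obtain ⟨A, B, C, hA, -, rfl⟩ := h
  intro hfix
  refine hx.intCast_mul_ne_intCast (mul_ne_zero two_ne_zero hA) (-B) ?_
  have hAR : (A : ℝ) ≠ 0 := by exact_mod_cast hA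
  field_simp at hfix
  push_cast
  linear_combination hfix

lemma isQuadraticIrrational (hx : Irrational x) (h : IsGaloisConj x x') :
    IsQuadraticIrrational x' := by
  refine ⟨h.irrational hx, ?_⟩
  obtain ⟨A, B, C, hA, hroot, rfl⟩ := h
  have hAR : (A : ℝ) ≠ 0 := by exact_mod_cast hA
  refine ⟨A, B, C, hA, ?_⟩
  field_simp
  linear_combination (A : ℝ) * hroot

lemma one_div_sub_intCast (hx : Irrational x) (h : IsGaloisConj x x') (n : ℤ) :
    IsGaloisConj (1 / x - n) (1 / x' - n) := by
  have hx' := (h.irrational hx).ne_zero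
  have hx0 := hx.ne_zero
  obtain ⟨A, B, C, hA, hroot, hdef⟩ := h
  have hC := hx.quadratic_const_ne_zero hA hroot
  have hAR : (A : ℝ) ≠ 0 := by exact_mod_cast hA
  have hCR : (C : ℝ) ≠ 0 := by exact_mod_cast hC
  have hsum : (A : ℝ) * (x + x') = -B := by
    rw [hdef]
    field_simp
    ring
  have hprod : (C : ℝ) = A * x * x' := by linear_combination hroot - x * hsum
  refine ⟨C, B + 2 * C * n, A + B * n + C * n ^ 2, hC, ?_, ?_⟩
  · push_cast
    field_simp
    linear_combination hroot
  · push_cast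
    field_simp
    linear_combination (x + x') * hprod + x * x' * hsum

end IsGaloisConj

lemma IsQuadraticIrrational.neg_one_div {y : ℝ} (h : IsQuadraticIrrational y) :
    IsQuadraticIrrational (-1 / y) := by
  obtain ⟨hy, A, B, C, hA, hroot⟩ := h
  have hy0 := hy.ne_zero
  refine ⟨?_, C, -B, A, hy.quadratic_const_ne_zero hA hroot, ?_⟩
  · rw [neg_div, one_div]
    exact hy.inv.neg
  · push_cast
    field_simp
    linear_combination hroot

/-- The conjugates `(F^[t] ω)'`, computed by the recursion they satisfy rather than from a
chosen equation of each iterate. -/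
noncomputable def conjOrbit (ω ω' : ℝ) : ℕ → ℝ
  | 0 => ω'
  | t + 1 => 1 / conjOrbit ω ω' t - ⌊1 / gaussMap^[t] ω⌋

section conjOrbit

variable {ω ω' : ℝ}

lemma isGaloisConj_conjOrbit (hω : ω ∈ gaussDomain) (h : IsGaloisConj ω ω') (t : ℕ) :
    IsGaloisConj (gaussMap^[t] ω) (conjOrbit ω ω' t) := by
  induction t with
  | zero => exact h
  | succ t ih =>
    have hxt := mapsTo_gaussMap.iterate t hω
    rw [iterate_succ_apply', gaussMap_of_mem hxt]
    exact ih.one_div_sub_intCast hxt.1 _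

lemma irrational_conjOrbit (hω : ω ∈ gaussDomain) (h : IsGaloisConj ω ω') (t : ℕ) :
    Irrational (conjOrbit ω ω' t) :=
  (isGaloisConj_conjOrbit hω h t).irrational (mapsTo_gaussMap.iterate t hω).1

lemma conjOrbit_periodic (hω : ω ∈ gaussDomain) (h : IsGaloisConj ω ω') {p : ℕ}
    (hper : gaussMap^[p] ω = ω) : Periodic (conjOrbit ω ω') p := by
  intro t
  have hconj := isGaloisConj_conjOrbit hω h (t + p)
  rw [iterate_add_apply, hper] at hconj
  exact hconj.unique (mapsTo_gaussMap.iterate t hω).1 (isGaloisConj_conjOrbit hω h t)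

lemma conjOrbit_succ_lt_neg_one (hω : ω ∈ gaussDomain) {t : ℕ} (hneg : conjOrbit ω ω' t < 0) :
    conjOrbit ω ω' (t + 1) < -1 := by
  have hn := one_le_floor_one_div (mapsTo_gaussMap.iterate t hω).2
  have hinv : 1 / conjOrbit ω ω' t < 0 := one_div_neg.mpr hneg
  simp only [conjOrbit]
  linarith

lemma exists_conjOrbit_neg (hω : ω ∈ gaussDomain) (h : IsGaloisConj ω ω') {p : ℕ} (hp : 0 < p)
    (hper : gaussMap^[p] ω = ω) : ∃ t, conjOrbit ω ω' t < 0 := by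
  by_contra! hnonneg
  have hpos t : 0 < conjOrbit ω ω' t :=
    (hnonneg t).lt_of_ne (irrational_conjOrbit hω h t).ne_zero.symm
  have hmono : StrictMono fun t => |gaussMap^[t] ω - conjOrbit ω ω' t| := by
    refine strictMono_nat_of_lt_succ fun t => ?_
    have hxt := mapsTo_gaussMap.iterate t hω
    have hn := one_le_floor_one_div hxt.2
    have hsucc : 0 < 1 / conjOrbit ω ω' t - ⌊1 / gaussMap^[t] ω⌋ := hpos (t + 1)
    have hle : conjOrbit ω ω' t ≤ 1 := (one_le_div (hpos t)).mp (by linarith)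
    have hlt := abs_sub_lt_abs_one_div_sub_one_div hxt.2.1 hxt.2.2 (hpos t) hle
      ((isGaloisConj_conjOrbit hω h t).ne hxt.1)
    simp only [iterate_succ_apply', gaussMap_of_mem hxt, conjOrbit, sub_sub_sub_cancel_right]
    exact hlt
  have hlt := hmono hp
  simp only [hper, (conjOrbit_periodic hω h hper).eq, iterate_zero_apply, lt_self_iff_false] at hlt

lemma conjOrbit_lt_neg_one (hω : ω ∈ gaussDomain) (h : IsGaloisConj ω ω') {p : ℕ} (hp : 0 < p)
    (hper : gaussMap^[p] ω = ω) (t : ℕ) : conjOrbit ω ω' t < -1 := by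
  obtain ⟨t₀, ht₀⟩ := exists_conjOrbit_neg hω h hp hper
  have hlater : ∀ s, t₀ + 1 ≤ s → conjOrbit ω ω' s < -1 := by
    intro s hs
    induction s, hs using Nat.le_induction with
    | base => exact conjOrbit_succ_lt_neg_one hω ht₀
    | succ s _ ih => exact conjOrbit_succ_lt_neg_one hω (by linarith)
  rw [← (conjOrbit_periodic hω h hper).nat_mul (t₀ + 1) t]
  exact hlater _ (le_add_left (Nat.le_mul_of_pos_right _ hp))

lemma neg_one_div_conjOrbit_mem_gaussDomain (hω : ω ∈ gaussDomain) (h : IsGaloisConj ω ω') {p : ℕ}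
    (hp : 0 < p) (hper : gaussMap^[p] ω = ω) (t : ℕ) : -1 / conjOrbit ω ω' t ∈ gaussDomain :=
  neg_one_div_mem_gaussDomain (irrational_conjOrbit hω h t) (conjOrbit_lt_neg_one hω h hp hper t)

lemma gaussMap_neg_one_div_conjOrbit_succ (hω : ω ∈ gaussDomain) (h : IsGaloisConj ω ω')
    {p : ℕ} (hp : 0 < p) (hper : gaussMap^[p] ω = ω) (t : ℕ) :
    gaussMap (-1 / conjOrbit ω ω' (t + 1)) = -1 / conjOrbit ω ω' t := by
  refine gaussMap_eq_of_one_div_eq (n := ⌊1 / gaussMap^[t] ω⌋)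
    (neg_one_div_conjOrbit_mem_gaussDomain hω h hp hper (t + 1))
    (Ioo_subset_Ico_self (neg_one_div_conjOrbit_mem_gaussDomain hω h hp hper t).2) ?_
  have hc := (irrational_conjOrbit hω h t).ne_zero
  have hc' := (irrational_conjOrbit hω h (t + 1)).ne_zero
  simp only [conjOrbit] at hc' ⊢
  field_simp
  ring

end conjOrbit

/-- Second half of Galois' theorem: if `ω ∈ (0,1)` is a purely periodic quadratic
irrational of period `p` for the Gauss map `F`, then `-1/ω'` lies in `(0,1)`, is a quadratic
irrational, is purely periodic of period `p`, and `F^[t](-1/ω') = -1/(F^[p-t](ω))'`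
for `0 ≤ t ≤ p`, where `'` denotes Galois conjugation. -/
theorem gauss_dual_of_purely_periodic
    (ω : ℝ) (hmem : ω ∈ Set.Ioo (0 : ℝ) 1) (hirr : Irrational ω)
    (a b c : ℤ) (ha : a ≠ 0)
    (hroot : (a : ℝ) * ω ^ 2 + (b : ℝ) * ω + (c : ℝ) = 0)
    (p : ℕ) (hp : 1 ≤ p) (hper : gaussMap^[p] ω = ω) :
    -1 / (-(b : ℝ) / (a : ℝ) - ω) ∈ Set.Ioo (0 : ℝ) 1 ∧
    IsQuadraticIrrational (-1 / (-(b : ℝ) / (a : ℝ) - ω)) ∧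
    gaussMap^[p] (-1 / (-(b : ℝ) / (a : ℝ) - ω)) = -1 / (-(b : ℝ) / (a : ℝ) - ω) ∧
    ∀ t : ℕ, t ≤ p →
      ∀ a' b' c' : ℤ, a' ≠ 0 →
        (a' : ℝ) * (gaussMap^[p - t] ω) ^ 2 + (b' : ℝ) * (gaussMap^[p - t] ω) + (c' : ℝ) = 0 →
        gaussMap^[t] (-1 / (-(b : ℝ) / (a : ℝ) - ω)) =
          -1 / (-(b' : ℝ) / (a' : ℝ) - gaussMap^[p - t] ω) := by
  set ω' : ℝ := -(b : ℝ) / (a : ℝ) - ω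
  have hω : ω ∈ gaussDomain := ⟨hirr, hmem⟩
  have hconj : IsGaloisConj ω ω' := ⟨a, b, c, ha, hroot, rfl⟩
  set η : ℕ → ℝ := fun t => -1 / conjOrbit ω ω' t
  have hstep : ∀ t, gaussMap (η (t + 1)) = η t :=
    gaussMap_neg_one_div_conjOrbit_succ hω hconj hp hper
  have hηp : η p = -1 / ω' := congrArg (-1 / ·) (conjOrbit_periodic hω hconj hper).eq
  refine ⟨(neg_one_div_conjOrbit_mem_gaussDomain hω hconj hp hper 0).2,
    (hconj.isQuadraticIrrational hirr).neg_one_div, ?_, ?_⟩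
  · rw [← hηp, iterate_apply_of_apply_succ hstep le_rfl, Nat.sub_self]
    exact hηp.symm
  · intro t ht a' b' c' ha' hroot'
    rw [← hηp, iterate_apply_of_apply_succ hstep ht]
    exact congrArg (-1 / ·) ((isGaloisConj_conjOrbit hω hconj (p - t)).unique
      (mapsTo_gaussMap.iterate (p - t) hω).1 ⟨a', b', c', ha', hroot', rfl⟩)
end

section
/- Let ω ∈ (−1,1) be a quadratic irrational and let O be the Odd map, O(x) = |1/x| − (2⌊|1/x|/2⌋ + 1) (that is, |1/x| minus the odd integer nearest to |1/x|). Then ω is purely periodic under O (i.e. O^[p](ω) = ω for some integer p ≥ 1) if and only if its Galois conjugate ω' satisfies: ω' ≤ −τ − 1 in case ω < 0, or ω' ≤ −τ + 1 in case ω > 0, where τ = (1+√5)/2 is the golden ratio. -/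
/-- The golden ratio `τ = (1 + √5)/2`. -/
noncomputable def goldenRatio' : ℝ := (1 + Real.sqrt 5) / 2

/-- The Odd map `x ↦ |1/x| - (2⌊|1/x|/2⌋ + 1)` (i.e. `|1/x|` minus the odd integer
nearest to `|1/x|`) on irrationals, extended by `0` at the remaining points. -/
noncomputable def oddMap (x : ℝ) : ℝ :=
  open Classical in
  if Irrational x then |1 / x| - (2 * (⌊|1 / x| / 2⌋ : ℤ) + 1) else 0

/-!
Follow a quadratic irrational `x` together with its Galois conjugate `y`: if
`oddMap x = ε / x - d`, then the conjugate of `oddMap x` is `ε / y - d`, and the discriminant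
of the pair does not change.

If `(x, y)` is reduced, so is its image. For a reduced pair `|x - y|` is bounded below, so
the integer quadratic is bounded in terms of its discriminant, and there are only finitely many
reduced pairs of a given discriminant. The map is injective on them, since `ε` and `d` can be read
off `ε / y = y' + d`, which lies in `(-τ, 2 - τ]`. So the map permutes a
finite set and every reduced pair is periodic.

Conversely, along a periodic orbit through a non-reduced pair no pair is reduced. Then either
the conjugate gets trapped in `(-τ - 1, -2)` with `x < 0`, where it strictly decreases towards
`-τ - 1`, the attracting fixed point of `y ↦ -1 / y - 3`; or it stays in `[-1, 1]`, where
`|x - y|` strictly increases because `|x' - y'| = |x - y| / |x y|`. Neither can happen on a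
periodic orbit.
-/

open Set Function

theorem Irrational.eq_zero_of_intCast_mul_add_intCast_eq_zero {x : ℝ} (hx : Irrational x)
    {m n : ℤ} (h : m * x + n = 0) : m = 0 := by
  by_contra hm
  exact ((hx.intCast_mul hm).add_intCast n).ne_zero h

theorem quadratic_vieta {a b c x y : ℝ} (hxy : x ≠ y) (hx : a * x ^ 2 + b * x + c = 0)
    (hy : a * y ^ 2 + b * y + c = 0) : a * (x + y) = -b ∧ a * (x * y) = c := by
  have hsum : a * (x + y) = -b := by
    have : (x - y) * (a * (x + y) + b) = 0 := by linear_combination hx - hy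
    linarith [(mul_eq_zero.mp this).resolve_left (sub_ne_zero.mpr hxy)]
  exact ⟨hsum, by linear_combination x * hsum - hx⟩

theorem abs_coeff_le_of_one_third_lt_sq_sub {a b c : ℤ} {x y : ℝ} (ha : a ≠ 0) (hxy : x ≠ y)
    (hx : a * x ^ 2 + b * x + c = 0) (hy : a * y ^ 2 + b * y + c = 0) (hx1 : |x| < 1)
    (hgap : 1 / 3 < (x - y) ^ 2) :
    |a| ≤ 27 * (b ^ 2 - 4 * a * c) ∧ |b| ≤ 27 * (b ^ 2 - 4 * a * c) ∧
      |c| ≤ 27 * (b ^ 2 - 4 * a * c) := by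
  set D := b ^ 2 - 4 * a * c with hD
  obtain ⟨hsum, hprod⟩ := quadratic_vieta hxy hx hy
  have hDsq : (D : ℝ) = (a * (x - y)) ^ 2 := by
    rw [hD]
    push_cast
    linear_combination (-(a : ℝ) * (x + y) + b) * hsum + 4 * a * hprod
  have ha2 : (a : ℝ) ^ 2 ≤ 3 * D := by nlinarith
  have hb2 : (b : ℝ) ^ 2 ≤ 26 * D := by
    have hb : (b : ℝ) = a * (x - y) - 2 * a * x := by linear_combination hsum
    have : x ^ 2 ≤ 1 := by nlinarith [abs_lt.mp hx1]
    rw [hb]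
    nlinarith [sq_nonneg ((a : ℝ) * (x - y) + 2 * a * x),
      mul_le_mul_of_nonneg_left this (sq_nonneg (a : ℝ))]
  have hD0 : 0 ≤ D := by exact_mod_cast hDsq ▸ sq_nonneg _
  have ha2' : a ^ 2 ≤ 3 * D := by exact_mod_cast ha2
  have hb2' : b ^ 2 ≤ 26 * D := by exact_mod_cast hb2
  have habs (n : ℤ) : |n| ≤ n ^ 2 := (Int.abs_eq_natAbs n).trans_le (Int.natAbs_le_self_sq n)
  have hc : |c| ≤ |b ^ 2 - D| := by
    rw [hD, sub_sub_cancel, abs_mul, abs_mul, abs_of_pos (four_pos : (0 : ℤ) < 4)]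
    nlinarith [Int.one_le_abs ha, abs_nonneg c]
  refine ⟨(habs a).trans (by linarith), (habs b).trans (by linarith),
    hc.trans ((abs_sub _ _).trans ?_)⟩
  rw [abs_of_nonneg (sq_nonneg b), abs_of_nonneg (by nlinarith)]
  linarith

theorem finite_setOf_quadratic_root_of_abs_le (M : ℤ) :
    {x : ℝ | ∃ a b c : ℤ, a ≠ 0 ∧ |a| ≤ M ∧ |b| ≤ M ∧ |c| ≤ M ∧
      a * x ^ 2 + b * x + c = 0}.Finite := by
  open Polynomial in
  let box : Set (ℤ × ℤ × ℤ) := {t | t.1 ≠ 0} ∩ Icc (-M) M ×ˢ Icc (-M) M ×ˢ Icc (-M) M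
  have hbox : box.Finite :=
    (((finite_Icc _ _).prod ((finite_Icc _ _).prod (finite_Icc _ _)))).subset inter_subset_right
  refine (hbox.biUnion fun t ht =>
    finite_setOfPred_isRoot (p := C (t.1 : ℝ) * X ^ 2 + C (t.2.1 : ℝ) * X + C (t.2.2 : ℝ))
      (leadingCoeff_ne_zero.mp ?_)).subset ?_
  · rw [leadingCoeff_quadratic (Int.cast_ne_zero.mpr ht.1)]
    exact Int.cast_ne_zero.mpr ht.1
  · rintro x ⟨a, b, c, ha, haM, hbM, hcM, hx⟩
    refine mem_biUnion (x := (a, b, c)) ⟨ha, ?_⟩ (by simpa using hx)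
    exact ⟨abs_le.mp haM, abs_le.mp hbM, abs_le.mp hcM⟩

theorem Set.InjOn.mem_periodicPts {α : Type*} {f : α → α} {s : Set α} (h : InjOn f s)
    (hs : s.Finite) (hmaps : MapsTo f s s) {x : α} (hx : x ∈ s) : x ∈ periodicPts f := by
  have := hs.to_subtype
  obtain ⟨n, hn, hper⟩ :=
    Function.mem_periodicPts.mp ((hmaps.restrict_inj.mpr h).mem_periodicPts ⟨x, hx⟩)
  refine mk_mem_periodicPts hn ?_
  simpa [IsPeriodicPt, IsFixedPt, MapsTo.iterate_restrict, Subtype.ext_iff] using hper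

theorem Function.IsPeriodicPt.mem_of_iterate_mem {α : Type*} {f : α → α} {s : Set α} {n m : ℕ}
    {x : α} (hx : IsPeriodicPt f n x) (hn : 0 < n) (hs : MapsTo f s s) (hm : f^[m] x ∈ s) :
    x ∈ s := by
  have : f^[n * m - m] (f^[m] x) = x := by
    rw [← iterate_add_apply, Nat.sub_add_cancel (Nat.le_mul_of_pos_left m hn)]
    exact (hx.mul_const m).eq
  exact this ▸ hs.iterate _ hm

theorem Function.IsPeriodicPt.not_strictMono {α β : Type*} [Preorder β] {f : α → α} {n : ℕ}
    {x : α} (hx : IsPeriodicPt f n x) (hn : 0 < n) (g : α → β) :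
    ¬StrictMono fun k => g (f^[k] x) :=
  fun hg => (hg hn).ne (congrArg g hx.eq.symm)

namespace OddCF

local notation "τ" => goldenRatio'

def IsConjPair (D : ℤ) (x y : ℝ) : Prop :=
  Irrational x ∧ Irrational y ∧ x ≠ y ∧ ∃ a b c : ℤ, a ≠ 0 ∧ b ^ 2 - 4 * a * c = D ∧
    a * x ^ 2 + b * x + c = 0 ∧ a * y ^ 2 + b * y + c = 0

namespace IsConjPair

variable {D D' : ℤ} {x y y' : ℝ}

theorem symm (h : IsConjPair D x y) : IsConjPair D y x := by
  obtain ⟨hx, hy, hxy, a, b, c, ha, hD, hrx, hry⟩ := h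
  exact ⟨hy, hx, hxy.symm, a, b, c, ha, hD, hry, hrx⟩

theorem right_unique (h : IsConjPair D x y) (h' : IsConjPair D' x y') : y = y' := by
  obtain ⟨hx, -, hxy, a, b, c, ha, -, hrx, hry⟩ := h
  obtain ⟨-, -, hxy', a', b', c', ha', -, hrx', hry'⟩ := h'
  have hab : a' * b - a * b' = 0 := hx.eq_zero_of_intCast_mul_add_intCast_eq_zero
    (n := a' * c - a * c') (by push_cast; linear_combination (a' : ℝ) * hrx - a * hrx')
  have hsum := (quadratic_vieta hxy hrx hry).1
  have hsum' := (quadratic_vieta hxy' hrx' hry').1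
  have hmul : ((a * a' : ℤ) : ℝ) * y = (a * a' : ℤ) * y' := by
    have hab' : (a' : ℝ) * b = a * b' := by exact_mod_cast sub_eq_zero.mp hab
    push_cast
    linear_combination (a' : ℝ) * hsum - a * hsum' - hab'
  exact mul_left_cancel₀ (Int.cast_ne_zero.mpr (mul_ne_zero ha ha')) hmul

theorem inv (h : IsConjPair D x y) : IsConjPair D x⁻¹ y⁻¹ := by
  obtain ⟨hx, hy, hxy, a, b, c, ha, hD, hrx, hry⟩ := h
  have hc : c ≠ 0 := by
    rintro rfl
    have := (quadratic_vieta hxy hrx hry).2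
    simp [ha, hx.ne_zero, hy.ne_zero] at this
  refine ⟨hx.inv, hy.inv, inv_injective.ne hxy, c, b, a, hc, by rw [← hD]; ring, ?_, ?_⟩
  · field_simp [hx.ne_zero]; linear_combination hrx
  · field_simp [hy.ne_zero]; linear_combination hry

theorem neg (h : IsConjPair D x y) : IsConjPair D (-x) (-y) := by
  obtain ⟨hx, hy, hxy, a, b, c, ha, hD, hrx, hry⟩ := h
  refine ⟨hx.neg, hy.neg, neg_injective.ne hxy, a, -b, c, ha, by rw [← hD]; ring, ?_, ?_⟩
  · push_cast; linear_combination hrx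
  · push_cast; linear_combination hry

theorem sub_intCast (h : IsConjPair D x y) (n : ℤ) : IsConjPair D (x - n) (y - n) := by
  obtain ⟨hx, hy, hxy, a, b, c, ha, hD, hrx, hry⟩ := h
  refine ⟨hx.sub_intCast n, hy.sub_intCast n, (sub_left_injective).ne hxy, a, b + 2 * a * n,
    a * n ^ 2 + b * n + c, ha, by rw [← hD]; ring, ?_, ?_⟩
  · push_cast; linear_combination hrx
  · push_cast; linear_combination hry

theorem sign_div_sub (h : IsConjPair D x y) (n : ℤ) :
    IsConjPair D (Real.sign x / x - n) (Real.sign x / y - n) := by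
  rcases Real.sign_apply_eq_of_ne_zero x h.1.ne_zero with hs | hs
  · simpa [hs, neg_div] using h.inv.neg.sub_intCast n
  · simpa [hs] using h.inv.sub_intCast n

end IsConjPair

theorem goldenRatio'_eq : τ = Real.goldenRatio := rfl

theorem goldenRatio'_sq : τ ^ 2 = τ + 1 := Real.goldenRatio_sq

theorem one_lt_goldenRatio' : 1 < τ := Real.one_lt_goldenRatio

theorem goldenRatio'_lt : τ < 5 / 3 := by
  nlinarith [goldenRatio'_sq, one_lt_goldenRatio']

theorem isConjPair_one_sub_goldenRatio' : IsConjPair 5 (1 - τ) τ := by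
  refine ⟨by simpa [goldenRatio'_eq, Real.one_sub_goldenConj] using Real.goldenConj_irrational,
    Real.goldenRatio_irrational, by linarith [one_lt_goldenRatio'], 1, -1, -1, one_ne_zero,
    by norm_num, ?_, ?_⟩ <;>
  · push_cast; linear_combination goldenRatio'_sq

noncomputable def oddDigit (x : ℝ) : ℤ := 2 * ⌊|1 / x| / 2⌋ + 1

theorem abs_one_div_sub_oddDigit_mem_Ico (x : ℝ) : |1 / x| - oddDigit x ∈ Ico (-1) 1 := by
  have h₁ := Int.floor_le (|1 / x| / 2)
  have h₂ := Int.lt_floor_add_one (|1 / x| / 2)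
  rw [oddDigit]
  push_cast
  constructor <;> linarith

theorem one_le_oddDigit (x : ℝ) : 1 ≤ oddDigit x := by
  have : 0 ≤ ⌊|1 / x| / 2⌋ := Int.floor_nonneg.mpr (by positivity)
  rw [oddDigit]
  omega

theorem abs_one_div_eq_sign_div {x : ℝ} (hx : x ≠ 0) : |1 / x| = Real.sign x / x := by
  rcases hx.lt_or_gt with h | h
  · rw [Real.sign_of_neg h, abs_of_neg (one_div_neg.mpr h), neg_div]
  · rw [Real.sign_of_pos h, abs_of_pos (one_div_pos.mpr h)]

theorem irrational_sign_div {x : ℝ} (hx : Irrational x) : Irrational (Real.sign x / x) := by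
  rcases Real.sign_apply_eq_of_ne_zero x hx.ne_zero with hs | hs
  · simpa [hs, neg_div] using hx.inv.neg
  · simpa [hs] using hx.inv

theorem oddMap_eq {x : ℝ} (hx : Irrational x) : oddMap x = |1 / x| - oddDigit x := by
  rw [oddMap, if_pos hx, oddDigit]
  push_cast
  ring

theorem oddMap_eq_sign_div {x : ℝ} (hx : Irrational x) :
    oddMap x = Real.sign x / x - oddDigit x := by
  rw [oddMap_eq hx, abs_one_div_eq_sign_div hx.ne_zero]

theorem irrational_oddMap {x : ℝ} (hx : Irrational x) : Irrational (oddMap x) := by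
  rw [oddMap_eq_sign_div hx]
  exact (irrational_sign_div hx).sub_intCast _

theorem oddMap_mem_Ioo {x : ℝ} (hx : Irrational x) : oddMap x ∈ Ioo (-1) 1 := by
  obtain ⟨h₁, h₂⟩ := abs_one_div_sub_oddDigit_mem_Ico x
  rw [oddMap_eq hx]
  refine ⟨h₁.lt_of_ne fun h => ?_, h₂⟩
  exact (irrational_oddMap hx).ne_int (-1) (by rw [oddMap_eq hx, ← h]; simp)

theorem three_le_oddDigit {x : ℝ} (hx : Irrational x) (h1 : |x| < 1) (h : oddMap x < 0) :
    3 ≤ oddDigit x := by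
  by_contra! hlt
  have hd : oddDigit x = 1 := by
    have := one_le_oddDigit x
    rw [oddDigit] at hlt this ⊢
    omega
  rw [oddMap_eq hx, hd, Int.cast_one, abs_one_div, sub_neg, div_lt_one (abs_pos.mpr hx.ne_zero)]
    at h
  linarith

/-- On a pair `(x, y)` with `IsConjPair D x y`, the second coordinate of the image is the
Galois conjugate of `oddMap x`. -/
noncomputable def oddPairMap (z : ℝ × ℝ) : ℝ × ℝ :=
  (oddMap z.1, Real.sign z.1 / z.2 - oddDigit z.1)

def oddDomain (D : ℤ) : Set (ℝ × ℝ) := {z | z.1 ∈ Ioo (-1) 1 ∧ IsConjPair D z.1 z.2}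

def reducedPairs : Set (ℝ × ℝ) := {z | (z.1 < 0 ∧ z.2 ≤ -τ - 1) ∨ (0 < z.1 ∧ z.2 ≤ -τ + 1)}

theorem fst_iterate_oddPairMap (n : ℕ) (z : ℝ × ℝ) : (oddPairMap^[n] z).1 = oddMap^[n] z.1 :=
  Semiconj.iterate_right (f := Prod.fst) (fun _ => rfl) n z

theorem mapsTo_oddPairMap (D : ℤ) : MapsTo oddPairMap (oddDomain D) (oddDomain D) := by
  rintro z ⟨-, hz⟩
  refine ⟨oddMap_mem_Ioo hz.1, ?_⟩
  rw [oddPairMap, oddMap_eq_sign_div hz.1]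
  exact hz.sign_div_sub _

section

variable {D : ℤ} {z : ℝ × ℝ}

theorem oddPairMap_mem_reducedPairs (hz : z ∈ oddDomain D) (h : Real.sign z.1 / z.2 ≤ 2 - τ) :
    oddPairMap z ∈ reducedPairs := by
  have hd := one_le_oddDigit z.1
  rcases (irrational_oddMap hz.2.1).ne_zero.lt_or_gt with hneg | hpos
  · have hd3 := three_le_oddDigit hz.2.1 (abs_lt.mpr hz.1) hneg
    refine Or.inl ⟨hneg, ?_⟩
    simp only [oddPairMap]
    have : (3 : ℝ) ≤ oddDigit z.1 := by exact_mod_cast hd3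
    linarith
  · refine Or.inr ⟨hpos, ?_⟩
    simp only [oddPairMap]
    have : (1 : ℝ) ≤ oddDigit z.1 := by exact_mod_cast hd
    linarith

theorem sign_div_mem_of_mem_reducedPairs (hz : z ∈ oddDomain D) (hr : z ∈ reducedPairs) :
    (0 < z.1 ∧ Real.sign z.1 / z.2 ∈ Ioo (-τ) 0) ∨
      (z.1 < 0 ∧ Real.sign z.1 / z.2 ∈ Ioc 0 (2 - τ)) := by
  have hτ := one_lt_goldenRatio'
  have hτ2 := goldenRatio'_sq
  rcases hr with ⟨hx, hy⟩ | ⟨hx, hy⟩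
  · have hy0 : z.2 < 0 := by linarith
    refine Or.inr ⟨hx, ?_⟩
    rw [Real.sign_of_neg hx, mem_Ioc, div_le_iff_of_neg hy0]
    exact ⟨div_pos_of_neg_of_neg (by norm_num) hy0, by nlinarith⟩
  · have hy' : z.2 < 1 - τ := by
      -- `y = 1 - τ` would make `x = τ` its conjugate
      refine (hy.trans_eq (neg_add_eq_sub τ 1)).lt_of_ne fun h => ?_
      have := hz.2.symm.right_unique (h ▸ isConjPair_one_sub_goldenRatio')
      linarith [hz.1.2]
    have hy0 : z.2 < 0 := by linarith
    refine Or.inl ⟨hx, ?_⟩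
    rw [Real.sign_of_pos hx, mem_Ioo, lt_div_iff_of_neg hy0]
    exact ⟨by nlinarith, div_neg_of_pos_of_neg one_pos hy0⟩

theorem mapsTo_oddPairMap_reducedPairs (D : ℤ) :
    MapsTo oddPairMap (oddDomain D ∩ reducedPairs) (oddDomain D ∩ reducedPairs) := by
  rintro z ⟨hz, hr⟩
  refine ⟨mapsTo_oddPairMap D hz, oddPairMap_mem_reducedPairs hz ?_⟩
  have := goldenRatio'_lt
  rcases sign_div_mem_of_mem_reducedPairs hz hr with ⟨-, h⟩ | ⟨-, h⟩
  · linarith [h.2]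
  · exact h.2

theorem injOn_oddPairMap (D : ℤ) : InjOn oddPairMap (oddDomain D ∩ reducedPairs) := by
  rintro z ⟨hz, hzr⟩ w ⟨hw, hwr⟩ h
  have hfst : Real.sign z.1 / z.1 - oddDigit z.1 = Real.sign w.1 / w.1 - oddDigit w.1 := by
    simpa only [oddPairMap, oddMap_eq_sign_div hz.2.1, oddMap_eq_sign_div hw.2.1]
      using congrArg Prod.fst h
  have hsnd : Real.sign z.1 / z.2 - oddDigit z.1 = Real.sign w.1 / w.2 - oddDigit w.1 :=
    congrArg Prod.snd h
  have hτ := goldenRatio'_lt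
  have hτ' := one_lt_goldenRatio'
  -- both values of `sign x / y` lie in `(-τ, 2 - τ]`, while distinct odd digits differ by `≥ 2`
  have hd : oddDigit z.1 = oddDigit w.1 := by
    have hlt : |((oddDigit z.1 - oddDigit w.1 : ℤ) : ℝ)| < 2 := by
      rw [abs_lt]
      push_cast
      rcases sign_div_mem_of_mem_reducedPairs hz hzr with ⟨-, hu⟩ | ⟨-, hu⟩ <;>
      rcases sign_div_mem_of_mem_reducedPairs hw hwr with ⟨-, hv⟩ | ⟨-, hv⟩ <;>
      exact ⟨by linarith [hu.1, hu.2, hv.1, hv.2], by linarith [hu.1, hu.2, hv.1, hv.2]⟩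
    have hlt' : |oddDigit z.1 - oddDigit w.1| < 2 := by exact_mod_cast hlt
    rw [oddDigit, oddDigit] at hlt' ⊢
    rw [abs_lt] at hlt'
    omega
  rw [hd, sub_left_inj] at hfst hsnd
  have hs : Real.sign z.1 = Real.sign w.1 := by
    rcases sign_div_mem_of_mem_reducedPairs hz hzr with ⟨hx, hu⟩ | ⟨hx, hu⟩ <;>
    rcases sign_div_mem_of_mem_reducedPairs hw hwr with ⟨hx', hv⟩ | ⟨hx', hv⟩
    · rw [Real.sign_of_pos hx, Real.sign_of_pos hx']
    · linarith [hu.2, hv.1]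
    · linarith [hu.1, hv.2]
    · rw [Real.sign_of_neg hx, Real.sign_of_neg hx']
  have hs0 : Real.sign z.1 ≠ 0 := Real.sign_eq_zero_iff.not.mpr hz.2.1.ne_zero
  rw [← hs] at hfst hsnd
  exact Prod.ext (inv_injective (mul_left_cancel₀ hs0 hfst))
    (inv_injective (mul_left_cancel₀ hs0 hsnd))

theorem one_third_lt_sq_sub (hx : -1 < z.1) (hr : z ∈ reducedPairs) :
    1 / 3 < (z.1 - z.2) ^ 2 := by
  have hgap : τ - 1 < z.1 - z.2 := by
    rcases hr with ⟨-, hy⟩ | ⟨hpos, hy⟩ <;> linarith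
  nlinarith [goldenRatio'_sq, goldenRatio'_lt, one_lt_goldenRatio']

end

theorem finite_oddDomain_inter_reducedPairs (D : ℤ) : (oddDomain D ∩ reducedPairs).Finite := by
  refine ((finite_setOf_quadratic_root_of_abs_le (27 * D)).prod
    (finite_setOf_quadratic_root_of_abs_le (27 * D))).subset ?_
  rintro z ⟨hz, hr⟩
  obtain ⟨-, -, hxy, a, b, c, ha, rfl, hrx, hry⟩ := hz.2
  obtain ⟨ha', hb', hc'⟩ := abs_coeff_le_of_one_third_lt_sq_sub ha hxy hrx hry
    (abs_lt.mpr hz.1) (one_third_lt_sq_sub hz.1.1 hr)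
  exact ⟨⟨a, b, c, ha, ha', hb', hc', hrx⟩, ⟨a, b, c, ha, ha', hb', hc', hry⟩⟩

theorem mem_periodicPts_of_mem_reducedPairs {D : ℤ} {z : ℝ × ℝ} (hz : z ∈ oddDomain D)
    (hr : z ∈ reducedPairs) : z ∈ periodicPts oddPairMap :=
  (injOn_oddPairMap D).mem_periodicPts (finite_oddDomain_inter_reducedPairs D)
    (mapsTo_oddPairMap_reducedPairs D) ⟨hz, hr⟩

theorem abs_sign_eq_one {x : ℝ} (hx : x ≠ 0) : |Real.sign x| = 1 := by
  rcases Real.sign_apply_eq_of_ne_zero x hx with h | h <;> simp [h]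

/-- The attracting fixed point of `y ↦ -1 / y - 3` is `-τ - 1`. -/
def trappedPairs : Set (ℝ × ℝ) := {z | z.1 < 0 ∧ -τ - 1 < z.2 ∧ z.2 < -2}

section

variable {D : ℤ} {z : ℝ × ℝ}

theorem two_sub_goldenRatio'_lt_sign_div (hz : z ∈ oddDomain D)
    (h : oddPairMap z ∉ reducedPairs) : 2 - τ < Real.sign z.1 / z.2 :=
  lt_of_not_ge fun hle => h (oddPairMap_mem_reducedPairs hz hle)

theorem oddPairMap_mem_trappedPairs (hz : z ∈ oddDomain D) (h₁ : oddPairMap z ∉ reducedPairs)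
    (h₂ : oddPairMap (oddPairMap z) ∉ reducedPairs) (hu : Real.sign z.1 / z.2 < 1) :
    oddPairMap z ∈ trappedPairs := by
  have hw := mapsTo_oddPairMap D hz
  have hd1 : (1 : ℝ) ≤ oddDigit z.1 := by exact_mod_cast one_le_oddDigit z.1
  have hy : (oddPairMap z).2 < 0 := by simp only [oddPairMap]; linarith
  have hx : (oddPairMap z).1 < 0 := by
    refine hw.2.1.ne_zero.lt_or_gt.resolve_right fun hpos => ?_
    have := two_sub_goldenRatio'_lt_sign_div hw h₂
    rw [Real.sign_of_pos hpos] at this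
    linarith [div_neg_of_pos_of_neg one_pos hy, goldenRatio'_lt]
  have hd3 : (3 : ℝ) ≤ oddDigit z.1 := by
    exact_mod_cast three_le_oddDigit hz.2.1 (abs_lt.mpr hz.1) hx
  refine ⟨hx, lt_of_not_ge fun hle => h₁ (Or.inl ⟨hx, by linarith⟩), ?_⟩
  simp only [oddPairMap]
  linarith

theorem sign_div_lt_one_of_mem_trappedPairs (ht : z ∈ trappedPairs) :
    Real.sign z.1 / z.2 < 1 := by
  rw [Real.sign_of_neg ht.1, div_lt_iff_of_neg (by linarith [ht.2.2])]
  linarith [ht.2.2]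

theorem snd_oddPairMap_lt_of_mem_trappedPairs (hz : z ∈ oddDomain D) (ht : z ∈ trappedPairs)
    (ht' : oddPairMap z ∈ trappedPairs) : (oddPairMap z).2 < z.2 := by
  obtain ⟨hx, hy₁, hy₂⟩ := ht
  have hd3 : (3 : ℝ) ≤ oddDigit z.1 := by
    exact_mod_cast three_le_oddDigit hz.2.1 (abs_lt.mpr hz.1) ht'.1
  have hkey : -1 / z.2 < z.2 + 3 := by
    rw [div_lt_iff_of_neg (by linarith)]
    nlinarith [goldenRatio'_sq, goldenRatio'_lt]
  simp only [oddPairMap, Real.sign_of_neg hx]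
  linarith

theorem abs_sub_lt_abs_sub_oddPairMap (hz : z ∈ oddDomain D) (hu : 1 ≤ Real.sign z.1 / z.2) :
    |z.1 - z.2| < |(oddPairMap z).1 - (oddPairMap z).2| := by
  obtain ⟨hx1, hx, hy, hxy, -⟩ := hz
  have hx0 := hx.ne_zero
  have hy0 := hy.ne_zero
  have hdiff : (oddPairMap z).1 - (oddPairMap z).2 = Real.sign z.1 * (z.2 - z.1) / (z.1 * z.2) := by
    simp only [oddPairMap, oddMap_eq_sign_div hx]
    field_simp
    ring
  have hy1 : |z.2| ≤ 1 := by
    have := hu.trans (le_abs_self _)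
    rwa [abs_div, abs_sign_eq_one hx0, one_le_div (abs_pos.mpr hy0)] at this
  have hxy0 : 0 < |z.1 - z.2| := abs_pos.mpr (sub_ne_zero.mpr hxy)
  rw [hdiff, abs_div, abs_mul, abs_sign_eq_one hx0, one_mul, abs_sub_comm z.2, abs_mul,
    lt_div_iff₀ (mul_pos (abs_pos.mpr hx0) (abs_pos.mpr hy0))]
  exact mul_lt_of_lt_one_right hxy0
    (mul_lt_one_of_nonneg_of_lt_one_left (abs_nonneg _) (abs_lt.mpr hx1) hy1)

end

theorem iterate_mem_trappedPairs {D : ℤ} {z : ℝ × ℝ} (hz : z ∈ oddDomain D)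
    (hnr : ∀ n, oddPairMap^[n] z ∉ reducedPairs) (ht : z ∈ trappedPairs) (k : ℕ) :
    oddPairMap^[k] z ∈ trappedPairs := by
  induction k generalizing z with
  | zero => exact ht
  | succ k ih =>
    refine ih (mapsTo_oddPairMap D hz)
      (fun n => by simpa only [← iterate_succ_apply] using hnr (n + 1))
      (oddPairMap_mem_trappedPairs hz (hnr 1) (hnr 2) (sign_div_lt_one_of_mem_trappedPairs ht))

theorem mem_reducedPairs_of_mem_periodicPts {D : ℤ} {z : ℝ × ℝ} (hz : z ∈ oddDomain D)
    (hper : z ∈ periodicPts oddPairMap) : z ∈ reducedPairs := by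
  obtain ⟨p, hp, hper⟩ := hper
  by_contra hred
  have hdom (n : ℕ) : oddPairMap^[n] z ∈ oddDomain D := (mapsTo_oddPairMap D).iterate n hz
  have hnr (n : ℕ) : oddPairMap^[n] z ∉ reducedPairs := fun h =>
    hred (hper.mem_of_iterate_mem hp (mapsTo_oddPairMap_reducedPairs D) ⟨hdom n, h⟩).2
  by_cases htrapped : ∃ m, oddPairMap^[m] z ∈ trappedPairs
  · obtain ⟨m, hm⟩ := htrapped
    have hall := iterate_mem_trappedPairs (hdom m)
      (fun n => by simpa only [← iterate_add_apply] using hnr (n + m)) hm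
    refine (hper.apply_iterate m).not_strictMono hp (fun w => -w.2)
      (strictMono_nat_of_lt_succ fun k => ?_)
    have hk := hall (k + 1)
    rw [iterate_succ_apply'] at hk ⊢
    exact neg_lt_neg (snd_oddPairMap_lt_of_mem_trappedPairs
      ((mapsTo_oddPairMap D).iterate k (hdom m)) (hall k) hk)
  · push Not at htrapped
    refine hper.not_strictMono hp (fun w => |w.1 - w.2|) (strictMono_nat_of_lt_succ fun n => ?_)
    rw [iterate_succ_apply']
    refine abs_sub_lt_abs_sub_oddPairMap (hdom n) (le_of_not_gt fun hu => ?_)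
    refine htrapped (n + 1) ?_
    rw [iterate_succ_apply']
    exact oddPairMap_mem_trappedPairs (hdom n)
      (by simpa only [iterate_succ_apply'] using hnr (n + 1))
      (by simpa only [iterate_succ_apply'] using hnr (n + 2)) hu

theorem isConjPair_neg_div_sub {x : ℝ} (hx : Irrational x) {a b c : ℤ} (ha : a ≠ 0)
    (hroot : a * x ^ 2 + b * x + c = 0) :
    IsConjPair (b ^ 2 - 4 * a * c) x (-b / a - x) := by
  have ha' : (a : ℝ) ≠ 0 := Int.cast_ne_zero.mpr ha
  refine ⟨hx, by simpa using hx.ratCast_sub (-b / a), fun h => ?_, a, b, c, ha, rfl, hroot, ?_⟩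
  · refine mul_ne_zero two_ne_zero ha (hx.eq_zero_of_intCast_mul_add_intCast_eq_zero (n := b) ?_)
    push_cast
    field_simp at h
    linarith
  · field_simp
    linear_combination a * hroot

theorem mem_periodicPts_oddPairMap_iff {D : ℤ} {z : ℝ × ℝ} (hz : z ∈ oddDomain D) :
    z ∈ periodicPts oddPairMap ↔ z.1 ∈ periodicPts oddMap := by
  refine ⟨fun ⟨p, hp, h⟩ => ⟨p, hp, ?_⟩, fun ⟨p, hp, h⟩ => ⟨p, hp, ?_⟩⟩
  · rw [IsPeriodicPt, IsFixedPt, ← fst_iterate_oddPairMap, h]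
  · have hfst : (oddPairMap^[p] z).1 = z.1 := (fst_iterate_oddPairMap p z).trans h
    have hw := ((mapsTo_oddPairMap D).iterate p hz).2
    rw [hfst] at hw
    exact Prod.ext hfst (hz.2.right_unique hw).symm

end OddCF

open OddCF in
/-- A quadratic irrational `ω ∈ (-1,1)` is purely periodic under the Odd map iff its
Galois conjugate `ω' = -b/a - ω` satisfies `ω' ≤ -τ-1` in case `ω < 0`, or
`ω' ≤ -τ+1` in case `ω > 0`. -/
theorem odd_purely_periodic_iff
    (ω : ℝ) (hmem : ω ∈ Set.Ioo (-1 : ℝ) 1) (hirr : Irrational ω)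
    (a b c : ℤ) (ha : a ≠ 0)
    (hroot : (a : ℝ) * ω ^ 2 + (b : ℝ) * ω + (c : ℝ) = 0) :
    (∃ p : ℕ, 1 ≤ p ∧ oddMap^[p] ω = ω) ↔
      ((ω < 0 ∧ -(b : ℝ) / (a : ℝ) - ω ≤ -goldenRatio' - 1) ∨
       (0 < ω ∧ -(b : ℝ) / (a : ℝ) - ω ≤ -goldenRatio' + 1)) := by
  have hz : (ω, -(b : ℝ) / a - ω) ∈ oddDomain (b ^ 2 - 4 * a * c) :=
    ⟨hmem, isConjPair_neg_div_sub hirr ha hroot⟩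
  change ω ∈ periodicPts oddMap ↔ (ω, -(b : ℝ) / a - ω) ∈ reducedPairs
  rw [← mem_periodicPts_oddPairMap_iff hz]
  exact ⟨mem_reducedPairs_of_mem_periodicPts hz, mem_periodicPts_of_mem_reducedPairs hz⟩
end

section
/- Let z : ℕ → Matrix (Fin 2) (Fin 2) ℤ be any sequence each of whose values is L = [[1,0],[1,1]] or N = [[1,1],[0,1]], and for t ≥ 0 set M_t = L · (z 0 · z 1 · ⋯ · z (t−1)) · L⁻¹ (so M_0 = identity). Then for every t the Möbius map f_{M_t}(x) = (a x + b)/(c x + d), where M_t = [[a,b],[c,d]], has positive denominator c x + d on [0,1] and maps [0,1] into [0,1]; the images J_t = f_{M_t}([0,1]) form a decreasing nested sequence of nonempty closed subintervals of [0,1]; and the intersection ⋂_{t≥0} J_t is a singleton. -/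
/-- `L = [[1,0],[1,1]]`. -/
def Lmat : Matrix (Fin 2) (Fin 2) ℤ := !![1, 0; 1, 1]

/-- `N = [[1,1],[0,1]]`. -/
def Nmat : Matrix (Fin 2) (Fin 2) ℤ := !![1, 1; 0, 1]

/-- `L⁻¹ = [[1,0],[-1,1]]`. -/
def Linv : Matrix (Fin 2) (Fin 2) ℤ := !![1, 0; -1, 1]

/-- The Möbius action of an integer matrix `[[a,b],[c,d]]` on `ℝ`: `x ↦ (ax+b)/(cx+d)`. -/
noncomputable def mobius (M : Matrix (Fin 2) (Fin 2) ℤ) (x : ℝ) : ℝ :=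
  ((M 0 0 : ℝ) * x + (M 0 1 : ℝ)) / ((M 1 0 : ℝ) * x + (M 1 1 : ℝ))

/-- `M_t = L ⬝ (z 0 ⬝ z 1 ⬝ ⋯ ⬝ z (t-1)) ⬝ L⁻¹`. -/
def conjWordProd (z : ℕ → Matrix (Fin 2) (Fin 2) ℤ) (t : ℕ) : Matrix (Fin 2) (Fin 2) ℤ :=
  Lmat * ((List.range t).map z).prod * Linv

/-!
Write `W_t = z 0 ⋯ z (t-1) = [[a,b],[c,d]]`; it has nonnegative entries and determinant one.
Conjugating by `L` turns its Möbius map on `[0,1]` into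
`x ↦ (a x + b (1-x)) / ((a+c) x + (b+d) (1-x))`, an increasing map from `[0,1]` onto the
interval between the column ratios `b/(b+d)` and `a/(a+c)`. Right multiplication by `L` or `N`
replaces one column by the sum of the two, so one endpoint is replaced by the mediant of both,
which lies between them: the intervals are nested. By unimodularity the interval has length
`1/((a+c)(b+d))`, and since each step adds one column sum to the other,
`(a+c) + (b+d) ≥ t + 2`, so the length is at most `1/(t+1)`.
-/

open Set Filter Topology Matrix

lemma div_le_add_div_add {a b p q : ℝ} (hp : 0 < p) (hq : 0 < q) (h : b / q ≤ a / p) :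
    b / q ≤ (a + b) / (p + q) := by
  rw [div_le_div_iff₀ hq hp] at h
  rw [div_le_div_iff₀ hq (by positivity)]
  linarith

lemma add_div_add_le_div {a b p q : ℝ} (hp : 0 < p) (hq : 0 < q) (h : b / q ≤ a / p) :
    (a + b) / (p + q) ≤ a / p := by
  rw [div_le_div_iff₀ hq hp] at h
  rw [div_le_div_iff₀ (by positivity) hp]
  linarith

lemma convex_comb_pos {p q x : ℝ} (hp : 0 < p) (hq : 0 < q) (hx : x ∈ Icc (0 : ℝ) 1) :
    0 < p * x + q * (1 - x) := by
  obtain ⟨hx0, hx1⟩ := hx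
  rcases hx0.eq_or_lt with rfl | hx0
  · simpa using hq
  · nlinarith

lemma image_Icc_div_convex_comb {a b p q : ℝ} (hp : 0 < p) (hq : 0 < q) (h : b / q ≤ a / p) :
    (fun x => (a * x + b * (1 - x)) / (p * x + q * (1 - x))) '' Icc 0 1 = Icc (b / q) (a / p) := by
  have hdet : b * p ≤ a * q := (div_le_div_iff₀ hq hp).1 h
  apply Subset.antisymm
  · rintro _ ⟨x, hx, rfl⟩
    have hD := convex_comb_pos hp hq hx
    constructor
    · rw [div_le_div_iff₀ hq hD]
      nlinarith [mul_le_mul_of_nonneg_left hdet hx.1]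
    · rw [div_le_div_iff₀ hD hp]
      nlinarith [mul_le_mul_of_nonneg_left hdet (sub_nonneg.2 hx.2)]
  · have hcont : ContinuousOn (fun x => (a * x + b * (1 - x)) / (p * x + q * (1 - x))) (Icc 0 1) :=
      ContinuousOn.div (by fun_prop) (by fun_prop) fun x hx => (convex_comb_pos hp hq hx).ne'
    simpa using intermediate_value_Icc zero_le_one hcont

lemma exists_iInter_Icc_eq_singleton {u v : ℕ → ℝ}
    (hJ : Antitone fun n => Icc (u n) (v n)) (huv : ∀ n, u n ≤ v n)
    (hlen : Tendsto (fun n => v n - u n) atTop (𝓝 0)) :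
    ∃ x, ⋂ n, Icc (u n) (v n) = {x} := by
  have hmem := ciSup_mem_iInter_Icc_of_antitone_Icc hJ huv
  refine ⟨⨆ n, u n, Subset.antisymm (fun y hy => ?_) (singleton_subset_iff.2 hmem)⟩
  have hdist : ∀ n, dist y (⨆ n, u n) ≤ v n - u n := fun n =>
    Real.dist_le_of_mem_Icc (mem_iInter.1 hy n) (mem_iInter.1 hmem n)
  exact dist_le_zero.1 (ge_of_tendsto' hlen hdist)

def nonnegUnimodular (n : Type*) [Fintype n] [DecidableEq n] : Submonoid (Matrix n n ℤ) where
  carrier := {A | (∀ i j, 0 ≤ A i j) ∧ A.det = 1}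
  mul_mem' := by
    rintro A B ⟨hA, hA1⟩ ⟨hB, hB1⟩
    exact ⟨fun i j => Finset.sum_nonneg fun k _ => mul_nonneg (hA i k) (hB k j),
      by rw [det_mul, hA1, hB1, one_mul]⟩
  one_mem' := ⟨fun i j => by by_cases h : i = j <;> simp [one_apply, h], det_one⟩

lemma Lmat_mem_nonnegUnimodular : Lmat ∈ nonnegUnimodular (Fin 2) :=
  ⟨by simp [Fin.forall_fin_two, Lmat], by simp [det_fin_two, Lmat]⟩

lemma Nmat_mem_nonnegUnimodular : Nmat ∈ nonnegUnimodular (Fin 2) :=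
  ⟨by simp [Fin.forall_fin_two, Nmat], by simp [det_fin_two, Nmat]⟩

@[simp] lemma mul_Lmat_apply_zero (W : Matrix (Fin 2) (Fin 2) ℤ) (i : Fin 2) :
    (W * Lmat) i 0 = W i 0 + W i 1 := by
  simp [mul_apply, Fin.sum_univ_two, Lmat]

@[simp] lemma mul_Lmat_apply_one (W : Matrix (Fin 2) (Fin 2) ℤ) (i : Fin 2) :
    (W * Lmat) i 1 = W i 1 := by
  simp [mul_apply, Fin.sum_univ_two, Lmat]

@[simp] lemma mul_Nmat_apply_zero (W : Matrix (Fin 2) (Fin 2) ℤ) (i : Fin 2) :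
    (W * Nmat) i 0 = W i 0 := by
  simp [mul_apply, Fin.sum_univ_two, Nmat]

@[simp] lemma mul_Nmat_apply_one (W : Matrix (Fin 2) (Fin 2) ℤ) (i : Fin 2) :
    (W * Nmat) i 1 = W i 0 + W i 1 := by
  simp [mul_apply, Fin.sum_univ_two, Nmat]

lemma Lmat_mul_mul_Linv (W : Matrix (Fin 2) (Fin 2) ℤ) : Lmat * W * Linv =
    !![W 0 0 - W 0 1, W 0 1; W 0 0 + W 1 0 - W 0 1 - W 1 1, W 0 1 + W 1 1] := by
  ext i j
  fin_cases i <;> fin_cases j <;>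
    simp [mul_apply, vecMul, dotProduct, Fin.sum_univ_two, Lmat, Linv] <;> ring

section Columns

variable {W : Matrix (Fin 2) (Fin 2) ℤ}

def colSum (W : Matrix (Fin 2) (Fin 2) ℤ) (j : Fin 2) : ℤ := W 0 j + W 1 j

noncomputable def colRatio (W : Matrix (Fin 2) (Fin 2) ℤ) (j : Fin 2) : ℝ :=
  (W 0 j : ℝ) / (colSum W j : ℝ)

lemma one_le_colSum (hW : W ∈ nonnegUnimodular (Fin 2)) (j : Fin 2) : 1 ≤ colSum W j := by
  obtain ⟨hnonneg, hdet⟩ := hW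
  rw [det_fin_two] at hdet
  by_contra! h
  have hzero : W 0 j = 0 ∧ W 1 j = 0 := by
    have := hnonneg 0 j; have := hnonneg 1 j; unfold colSum at h; omega
  fin_cases j <;> simp_all

lemma colSum_pos (hW : W ∈ nonnegUnimodular (Fin 2)) (j : Fin 2) : (0 : ℝ) < colSum W j := by
  exact_mod_cast one_le_colSum hW j

lemma colRatio_nonneg (hW : W ∈ nonnegUnimodular (Fin 2)) (j : Fin 2) : 0 ≤ colRatio W j :=
  div_nonneg (by exact_mod_cast hW.1 0 j) (colSum_pos hW j).le

lemma colRatio_le_one (hW : W ∈ nonnegUnimodular (Fin 2)) (j : Fin 2) : colRatio W j ≤ 1 := by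
  refine div_le_one_of_le₀ ?_ (colSum_pos hW j).le
  exact_mod_cast (le_add_of_nonneg_right (hW.1 1 j) : W 0 j ≤ colSum W j)

lemma colRatio_sub_colRatio (hW : W ∈ nonnegUnimodular (Fin 2)) :
    colRatio W 0 - colRatio W 1 = 1 / ((colSum W 0 : ℝ) * colSum W 1) := by
  have hdet : (W 0 0 : ℝ) * W 1 1 - W 0 1 * W 1 0 = 1 := by
    have := hW.2; rw [det_fin_two] at this; exact_mod_cast this
  have h0 := (colSum_pos hW 0).ne'
  have h1 := (colSum_pos hW 1).ne'
  rw [colRatio, colRatio, div_sub_div _ _ h0 h1, ← hdet]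
  simp only [colSum]; push_cast; ring

lemma colRatio_one_le_colRatio_zero (hW : W ∈ nonnegUnimodular (Fin 2)) :
    colRatio W 1 ≤ colRatio W 0 := by
  rw [← sub_nonneg, colRatio_sub_colRatio hW]
  have := colSum_pos hW 0; have := colSum_pos hW 1
  positivity

lemma mobius_Lmat_mul_mul_Linv (W : Matrix (Fin 2) (Fin 2) ℤ) (x : ℝ) :
    mobius (Lmat * W * Linv) x =
      (W 0 0 * x + W 0 1 * (1 - x)) / (colSum W 0 * x + colSum W 1 * (1 - x)) := by
  simp only [mobius, Lmat_mul_mul_Linv, colSum, of_apply, cons_val', cons_val_zero, cons_val_one,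
    empty_val', cons_val_fin_one]
  push_cast
  ring

lemma Lmat_mul_mul_Linv_denom (W : Matrix (Fin 2) (Fin 2) ℤ) (x : ℝ) :
    ((Lmat * W * Linv) 1 0 : ℝ) * x + ((Lmat * W * Linv) 1 1 : ℝ) =
      colSum W 0 * x + colSum W 1 * (1 - x) := by
  simp only [Lmat_mul_mul_Linv, colSum, of_apply, cons_val', cons_val_zero, cons_val_one,
    empty_val', cons_val_fin_one]
  push_cast
  ring

lemma image_mobius_Lmat_mul_mul_Linv (hW : W ∈ nonnegUnimodular (Fin 2)) :
    mobius (Lmat * W * Linv) '' Icc 0 1 = Icc (colRatio W 1) (colRatio W 0) := by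
  rw [show mobius (Lmat * W * Linv) = _ from funext (mobius_Lmat_mul_mul_Linv W)]
  exact image_Icc_div_convex_comb (colSum_pos hW 0) (colSum_pos hW 1)
    (colRatio_one_le_colRatio_zero hW)

@[simp] lemma colSum_mul_Lmat_zero (W : Matrix (Fin 2) (Fin 2) ℤ) :
    colSum (W * Lmat) 0 = colSum W 0 + colSum W 1 := by
  simp only [colSum, mul_Lmat_apply_zero]; ring

@[simp] lemma colSum_mul_Lmat_one (W : Matrix (Fin 2) (Fin 2) ℤ) :
    colSum (W * Lmat) 1 = colSum W 1 := by
  simp only [colSum, mul_Lmat_apply_one]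

@[simp] lemma colSum_mul_Nmat_zero (W : Matrix (Fin 2) (Fin 2) ℤ) :
    colSum (W * Nmat) 0 = colSum W 0 := by
  simp only [colSum, mul_Nmat_apply_zero]

@[simp] lemma colSum_mul_Nmat_one (W : Matrix (Fin 2) (Fin 2) ℤ) :
    colSum (W * Nmat) 1 = colSum W 0 + colSum W 1 := by
  simp only [colSum, mul_Nmat_apply_one]; ring

/-- Right multiplication by `L` or `N` replaces one column by the sum of both columns, hence one
endpoint of the interval by the mediant of the two. -/
lemma Icc_colRatio_mul_subset (hW : W ∈ nonnegUnimodular (Fin 2)) {Z : Matrix (Fin 2) (Fin 2) ℤ}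
    (hZ : Z = Lmat ∨ Z = Nmat) :
    Icc (colRatio (W * Z) 1) (colRatio (W * Z) 0) ⊆ Icc (colRatio W 1) (colRatio W 0) := by
  have hp := colSum_pos hW 0
  have hq := colSum_pos hW 1
  have h := colRatio_one_le_colRatio_zero hW
  simp only [colRatio] at h ⊢
  rcases hZ with rfl | rfl <;> refine Icc_subset_Icc ?_ ?_ <;>
    simp only [mul_Lmat_apply_zero, mul_Lmat_apply_one, mul_Nmat_apply_zero, mul_Nmat_apply_one,
      colSum_mul_Lmat_zero, colSum_mul_Lmat_one, colSum_mul_Nmat_zero, colSum_mul_Nmat_one,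
      Int.cast_add, le_refl]
  · exact add_div_add_le_div hp hq h
  · exact div_le_add_div_add hp hq h

lemma colSum_add_colSum_mul (hW : W ∈ nonnegUnimodular (Fin 2)) {Z : Matrix (Fin 2) (Fin 2) ℤ}
    (hZ : Z = Lmat ∨ Z = Nmat) :
    colSum W 0 + colSum W 1 + 1 ≤ colSum (W * Z) 0 + colSum (W * Z) 1 := by
  have := one_le_colSum hW 0
  have := one_le_colSum hW 1
  rcases hZ with rfl | rfl <;> simp only [colSum_mul_Lmat_zero, colSum_mul_Lmat_one,
    colSum_mul_Nmat_zero, colSum_mul_Nmat_one] <;> omega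

lemma colRatio_sub_colRatio_le (hW : W ∈ nonnegUnimodular (Fin 2)) :
    colRatio W 0 - colRatio W 1 ≤ 1 / ((colSum W 0 : ℝ) + colSum W 1 - 1) := by
  have h0 : (1 : ℝ) ≤ colSum W 0 := by exact_mod_cast one_le_colSum hW 0
  have h1 : (1 : ℝ) ≤ colSum W 1 := by exact_mod_cast one_le_colSum hW 1
  rw [colRatio_sub_colRatio hW]
  exact one_div_le_one_div_of_le (by linarith) (by nlinarith)

end Columns

section WordProd

variable {z : ℕ → Matrix (Fin 2) (Fin 2) ℤ}

def wordProd (z : ℕ → Matrix (Fin 2) (Fin 2) ℤ) (t : ℕ) : Matrix (Fin 2) (Fin 2) ℤ :=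
  ((List.range t).map z).prod

lemma conjWordProd_eq (t : ℕ) : conjWordProd z t = Lmat * wordProd z t * Linv := rfl

lemma wordProd_succ (t : ℕ) : wordProd z (t + 1) = wordProd z t * z t :=
  List.prod_range_succ z t

lemma wordProd_mem_nonnegUnimodular (hz : ∀ t, z t = Lmat ∨ z t = Nmat) (t : ℕ) :
    wordProd z t ∈ nonnegUnimodular (Fin 2) := by
  refine Submonoid.list_prod_mem _ fun Z hZ => ?_
  obtain ⟨s, -, rfl⟩ := List.mem_map.1 hZ
  rcases hz s with h | h <;> rw [h]
  exacts [Lmat_mem_nonnegUnimodular, Nmat_mem_nonnegUnimodular]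

lemma antitone_Icc_colRatio_wordProd (hz : ∀ t, z t = Lmat ∨ z t = Nmat) :
    Antitone fun t => Icc (colRatio (wordProd z t) 1) (colRatio (wordProd z t) 0) :=
  antitone_nat_of_succ_le fun t => by
    simpa only [wordProd_succ] using
      Icc_colRatio_mul_subset (wordProd_mem_nonnegUnimodular hz t) (hz t)

lemma add_two_le_colSum_add_colSum_wordProd (hz : ∀ t, z t = Lmat ∨ z t = Nmat) (t : ℕ) :
    (t : ℤ) + 2 ≤ colSum (wordProd z t) 0 + colSum (wordProd z t) 1 := by
  induction t with
  | zero => simp [wordProd, colSum]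
  | succ t ih =>
    rw [wordProd_succ]
    have := colSum_add_colSum_mul (wordProd_mem_nonnegUnimodular hz t) (hz t)
    push_cast
    omega

lemma colRatio_sub_colRatio_wordProd_le (hz : ∀ t, z t = Lmat ∨ z t = Nmat) (t : ℕ) :
    colRatio (wordProd z t) 0 - colRatio (wordProd z t) 1 ≤ 1 / ((t : ℝ) + 1) := by
  have hW := wordProd_mem_nonnegUnimodular hz t
  have hsum : (t : ℝ) + 2 ≤ colSum (wordProd z t) 0 + colSum (wordProd z t) 1 := by
    exact_mod_cast add_two_le_colSum_add_colSum_wordProd hz t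
  exact (colRatio_sub_colRatio_le hW).trans (one_div_le_one_div_of_le (by positivity) (by linarith))

end WordProd

/-- For any sequence `z` of matrices each equal to `L` or `N`, the Möbius maps of
`M_t = L (z 0 ⋯ z (t-1)) L⁻¹` have positive denominator on `[0,1]`, map `[0,1]` into
`[0,1]`; the images `J_t = f_{M_t}([0,1])` form a decreasing nested sequence of nonempty
closed subintervals of `[0,1]`; and `⋂ t, J_t` is a singleton. -/
theorem nested_unimodular_intervals
    (z : ℕ → Matrix (Fin 2) (Fin 2) ℤ) (hz : ∀ t, z t = Lmat ∨ z t = Nmat) :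
    (∀ t : ℕ, ∀ x ∈ Set.Icc (0 : ℝ) 1,
        0 < ((conjWordProd z t) 1 0 : ℝ) * x + ((conjWordProd z t) 1 1 : ℝ) ∧
        mobius (conjWordProd z t) x ∈ Set.Icc (0 : ℝ) 1) ∧
    (∀ t : ℕ, mobius (conjWordProd z (t + 1)) '' Set.Icc (0 : ℝ) 1 ⊆
        mobius (conjWordProd z t) '' Set.Icc (0 : ℝ) 1) ∧
    (∀ t : ℕ, ∃ u v : ℝ, u ≤ v ∧ 0 ≤ u ∧ v ≤ 1 ∧
        mobius (conjWordProd z t) '' Set.Icc (0 : ℝ) 1 = Set.Icc u v) ∧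
    (∃ x : ℝ, (⋂ t : ℕ, mobius (conjWordProd z t) '' Set.Icc (0 : ℝ) 1) = {x}) := by
  have hW := wordProd_mem_nonnegUnimodular hz
  have himage : ∀ t, mobius (conjWordProd z t) '' Icc 0 1 =
      Icc (colRatio (wordProd z t) 1) (colRatio (wordProd z t) 0) := fun t =>
    image_mobius_Lmat_mul_mul_Linv (hW t)
  have hsub : ∀ t, Icc (colRatio (wordProd z t) 1) (colRatio (wordProd z t) 0) ⊆ Icc 0 1 :=
    fun t => Icc_subset_Icc (colRatio_nonneg (hW t) 1) (colRatio_le_one (hW t) 0)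
  refine ⟨fun t x hx => ⟨?_, ?_⟩, fun t => ?_, fun t => ?_, ?_⟩
  · rw [conjWordProd_eq, Lmat_mul_mul_Linv_denom]
    exact convex_comb_pos (colSum_pos (hW t) 0) (colSum_pos (hW t) 1) hx
  · exact hsub t (himage t ▸ mem_image_of_mem _ hx)
  · simpa only [himage] using antitone_Icc_colRatio_wordProd hz (Nat.le_succ t)
  · exact ⟨_, _, colRatio_one_le_colRatio_zero (hW t), colRatio_nonneg (hW t) 1,
      colRatio_le_one (hW t) 0, himage t⟩
  · simp only [himage]
    refine exists_iInter_Icc_eq_singleton (antitone_Icc_colRatio_wordProd hz)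
      (fun t => colRatio_one_le_colRatio_zero (hW t)) ?_
    exact squeeze_zero (fun t => sub_nonneg.2 (colRatio_one_le_colRatio_zero (hW t)))
      (colRatio_sub_colRatio_wordProd_le hz) tendsto_one_div_add_atTop_nhds_zero_nat
end
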